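/- Under the hypotheses of Theorem (main converse), if the word X_1 = (x_1,...,x_n) does not occur in the sequence S produced by Algorithm P, then neither does the word X_2 = (x_2,...,x_n,c), where c = P_t(x_{n-s+2},...,x_n). -/
import Mathlib


namespace DeBruijnPaper

/-- The word (block) of length `n` starting at position `i` of the sequence `a`. -/
def wordAt {t : ℕ} (a : ℕ → Fin t) (n i : ℕ) : Fin n → Fin t :=
  fun j => a (i + (j : ℕ))

/-- `w` has appeared as a block entirely within the first `k` symbols of `a`. -/
def Seen {t : ℕ} (a : ℕ → Fin t) (n k : ℕ) (w : Fin n → Fin t) : Prop :=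
  ∃ p, p + n ≤ k ∧ wordAt a n p = w

/-- The candidate `n`-word whose last symbol (at position `k`) is replaced by `c`,
preceded by the `n-1` symbols `a (k-(n-1)), …, a (k-1)`. -/
def cand {t : ℕ} (a : ℕ → Fin t) (n k : ℕ) (c : Fin t) : Fin n → Fin t :=
  fun j => if (j : ℕ) + 1 = n then c else a (k - (n - 1) + (j : ℕ))

/-- `P` is a preference function of span `m`: to each word of length `m` it assigns a
priority listing of the alphabet, i.e. `P w : Fin t → Fin t` is a bijection,
`P w i` being the `i`-th preferred symbol after the word `w`. -/
def IsPrefFun (t m : ℕ) (P : (Fin m → Fin t) → Fin t → Fin t) : Prop :=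
  ∀ w, Function.Bijective (P w)

/-- The sequence `a` (of length `L`) is produced by the greedy Algorithm P for the
preference function `P` of span `m`, at order `n`, from the initial word `I`:
it starts with `I`, every `n`-word occurs at most once, each appended symbol is the
highest-priority symbol (priorities determined by the last `m` symbols) forming a
new `n`-word, and the sequence is maximal (cannot be extended). -/
structure GenSeqFrom (t m n : ℕ) (I : Fin n → Fin t)
    (P : (Fin m → Fin t) → Fin t → Fin t) (a : ℕ → Fin t) (L : ℕ) : Prop where
  len_ge : n ≤ L
  init : ∀ j : Fin n, a (j : ℕ) = I j
  inj : ∀ i j, i + n ≤ L → j + n ≤ L → wordAt a n i = wordAt a n j → i = j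
  greedy : ∀ k, n ≤ k → k < L → ∃ i : Fin t,
    a k = P (wordAt a m (k - m)) i ∧
    ∀ j : Fin t, j < i → Seen a n k (cand a n k (P (wordAt a m (k - m)) j))
  maximal : ∀ c : Fin t, Seen a n L (cand a n L c)

/-- The sequence `a` of length `L` contains every `n`-word over the alphabet. -/
def Full (t n : ℕ) (a : ℕ → Fin t) (L : ℕ) : Prop :=
  ∀ w : Fin n → Fin t, ∃ p, p + n ≤ L ∧ wordAt a n p = w

/-- The all-zero word `0^n`. -/
def zeroWord (t n : ℕ) [NeZero t] : Fin n → Fin t := fun _ => 0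

/-- The least preference function induced by `P`:
`g(a_1,…,a_m) = (a_2,…,a_m, P_t(a_1,…,a_m))`. -/
def leastPF {t m : ℕ} (ht : 0 < t) (P : (Fin m → Fin t) → Fin t → Fin t)
    (w : Fin m → Fin t) : Fin m → Fin t :=
  fun j => if h : (j : ℕ) + 1 = m then P w ⟨t - 1, Nat.sub_lt ht Nat.one_pos⟩
           else w ⟨(j : ℕ) + 1, by have := j.isLt; omega⟩

/-- `g` has no cycles of any length other than the self-loop at the all-zero word. -/
def OnlyZeroCycle {t m : ℕ} [NeZero t] (g : (Fin m → Fin t) → Fin m → Fin t) : Prop :=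
  g (fun _ => 0) = (fun _ => 0) ∧
  ∀ (x : Fin m → Fin t) (l : ℕ), 0 < l → g^[l] x = x → x = fun _ => 0

/-- Extend a finite sequence by zeros to a sequence indexed by `ℕ`. -/
def ext {t L : ℕ} [NeZero t] (S : Fin L → Fin t) : ℕ → Fin t :=
  fun i => if h : i < L then S ⟨i, h⟩ else 0

-- KEY LEMMA: all words (e, 0^{n-1}) occur.
lemma key_lemma {t : ℕ} [NeZero t] {n L : ℕ} (a : ℕ → Fin t)
    (hn : 2 ≤ n) (hlen : n ≤ L)
    (hinit : ∀ j : Fin n, a (j : ℕ) = 0)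
    (hinj : ∀ i j, i + n ≤ L → j + n ≤ L → wordAt a n i = wordAt a n j → i = j)
    (hmax : ∀ c : Fin t, Seen a n L (cand a n L c)) (e : Fin t) :
    ∃ q, q + n ≤ L ∧ wordAt a n q = fun j : Fin n => if (j : ℕ) = 0 then e else 0 := by
  set M := L - n with hM
  have hLM : L = M + n := by omega
  have hL1 : L - (n - 1) = M + 1 := by omega
  set Occ : Finset ℕ :=
    (Finset.range (M + 2)).filter (fun i => ∀ j < n - 1, a (i + j) = a (M + 1 + j)) with hOcc
  have hmem : ∀ i, i ∈ Occ ↔ i ≤ M + 1 ∧ ∀ j < n - 1, a (i + j) = a (M + 1 + j) := by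
    intro i
    simp only [hOcc, Finset.mem_filter, Finset.mem_range]
    constructor
    · rintro ⟨h1, h2⟩; exact ⟨by omega, h2⟩
    · rintro ⟨h1, h2⟩; exact ⟨by omega, h2⟩
  have hTop : M + 1 ∈ Occ := (hmem _).2 ⟨le_refl _, fun j _ => rfl⟩
  -- positions from maximality
  have hF : ∀ c : Fin t, ∃ q, q ≤ M ∧ q ∈ Occ ∧ a (q + (n - 1)) = c := by
    intro c
    obtain ⟨q, hq1, hq2⟩ := hmax c
    have hqM : q ≤ M := by omega
    have hval : ∀ j : Fin n, a (q + (j : ℕ)) =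
        if (j : ℕ) + 1 = n then c else a (L - (n - 1) + (j : ℕ)) := fun j => congrFun hq2 j
    refine ⟨q, hqM, (hmem _).2 ⟨by omega, ?_⟩, ?_⟩
    · intro j hj
      have := hval (⟨j, by omega⟩ : Fin n)
      simp only [if_neg (by omega : ¬ (j + 1 = n))] at this
      rw [this, hL1]
    · have := hval ⟨n - 1, by omega⟩
      simp only [if_pos (by omega : n - 1 + 1 = n)] at this
      exact this
  choose F hF1 hF2 hF3 using hF
  have hFinj : Function.Injective F := by
    intro c c' h
    rw [← hF3 c, ← hF3 c', h]
  -- card bounds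
  have hFmem : ∀ c : Fin t, F c ∈ Occ.erase (M + 1) := by
    intro c
    exact Finset.mem_erase.2 ⟨by have := hF1 c; omega, hF2 c⟩
  have hOut : (t : ℕ) ≤ (Occ.erase (M + 1)).card := by
    have := Finset.card_le_card_of_injOn (s := (Finset.univ : Finset (Fin t))) F
      (fun c _ => hFmem c)
      (fun c _ c' _ h => hFinj h)
    simpa using this
  have hOccCard : (Occ.erase (M + 1)).card + 1 = Occ.card := Finset.card_erase_add_one hTop
  have hInInj : Set.InjOn (fun i => a (i - 1)) (Occ.erase 0 : Finset ℕ) := by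
    intro i hi i' hi' h
    simp only [Finset.coe_erase, Set.mem_diff, Finset.mem_coe, Set.mem_singleton_iff] at hi hi'
    obtain ⟨hiO, hi0⟩ := hi
    obtain ⟨hi'O, hi'0⟩ := hi'
    have hiO := (hmem i).1 hiO
    have hi'O := (hmem i').1 hi'O
    have hword : ∀ m, m ∈ Occ → m ≠ 0 →
        wordAt a n (m - 1) = fun j : Fin n => if (j : ℕ) = 0 then a (m - 1) else a (M + j) := by
      intro m hm hm0
      obtain ⟨hmle, hmv⟩ := (hmem m).1 hm
      funext j
      rcases Nat.eq_zero_or_pos (j : ℕ) with h0 | h0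
      · simp [wordAt, h0]
      · have h1 : m - 1 + (j : ℕ) = m + ((j : ℕ) - 1) := by omega
        have h2 := hmv ((j : ℕ) - 1) (by have := j.isLt; omega)
        have h3 : M + 1 + ((j : ℕ) - 1) = M + (j : ℕ) := by omega
        simp only [wordAt, if_neg (by omega : ¬ ((j : ℕ) = 0))]
        rw [h1, h2, h3]
    have heq : wordAt a n (i - 1) = wordAt a n (i' - 1) := by
      rw [hword i (by exact (hmem i).2 hiO) hi0, hword i' (by exact (hmem i').2 hi'O) hi'0]
      have h' : a (i - 1) = a (i' - 1) := h
      rw [h']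
    have := hinj (i - 1) (i' - 1) (by omega) (by omega) heq
    omega
  have hIn : (Occ.erase 0).card ≤ t := by
    have := Finset.card_le_card_of_injOn (fun i => a (i - 1))
      (fun i _ => Finset.mem_univ _) hInInj
    simpa using this
  have h0Occ : 0 ∈ Occ := by
    by_contra h0
    rw [Finset.erase_eq_of_notMem h0] at hIn
    omega
  have hInCard : (Occ.erase 0).card = t := by
    have := Finset.card_erase_add_one h0Occ
    omega
  -- a is zero on the tail positions M+1+j, j < n-1
  have hzero_tail : ∀ j < n - 1, a (M + 1 + j) = 0 := by
    intro j hj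
    have := ((hmem 0).1 h0Occ).2 j hj
    rw [← this]
    simpa using hinit (⟨j, by omega⟩ : Fin n)
  -- surjectivity of the predecessor map
  have hsurj : ∃ i ∈ Occ.erase 0, a (i - 1) = e := by
    have himg : Finset.image (fun i => a (i - 1)) (Occ.erase 0) = Finset.univ := by
      apply Finset.eq_univ_of_card
      simp [Finset.card_image_of_injOn hInInj, hInCard]
    have : e ∈ Finset.image (fun i => a (i - 1)) (Occ.erase 0) := by
      rw [himg]; exact Finset.mem_univ e
    simpa using this
  obtain ⟨i, hiIn, hie⟩ := hsurj
  rw [Finset.mem_erase] at hiIn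
  obtain ⟨hi0, hiO⟩ := hiIn
  obtain ⟨hile, hiv⟩ := (hmem i).1 hiO
  refine ⟨i - 1, by omega, ?_⟩
  funext j
  rcases Nat.eq_zero_or_pos (j : ℕ) with h0 | h0
  · simp [wordAt, h0, hie]
  · have h1 : i - 1 + (j : ℕ) = i + ((j : ℕ) - 1) := by omega
    have h2 := hiv ((j : ℕ) - 1) (by have := j.isLt; omega)
    simp only [wordAt, if_neg (by omega : ¬ ((j : ℕ) = 0))]
    rw [h1, h2, hzero_tail _ (by have := j.isLt; omega)]


/-- The candidate word `(x₂,…,xₙ,d)`. -/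
def Ycand {t : ℕ} (n : ℕ) (x : Fin n → Fin t) (d : Fin t) : Fin n → Fin t :=
  fun j => if h : (j : ℕ) + 1 = n then d
           else x ⟨(j : ℕ) + 1, by have := j.isLt; omega⟩

lemma main_aux {t n m : ℕ} [NeZero t] (ht : 2 ≤ t) (hm1 : 1 ≤ m) (hmn : m + 1 ≤ n)
    (P : (Fin m → Fin t) → Fin t → Fin t) (hP : IsPrefFun t m P)
    (a : ℕ → Fin t) (L : ℕ) (hGen : GenSeqFrom t m n (zeroWord t n) P a L)
    (x : Fin n → Fin t)
    (hx : ¬ ∃ p, p + n ≤ L ∧ wordAt a n p = x)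
    (c : Fin t)
    (hc : c = P (fun i : Fin m => x ⟨n - m + (i : ℕ), by have := i.isLt; omega⟩)
      ⟨t - 1, by omega⟩)
    (p : ℕ) (hpL : p + n ≤ L) (hpW : wordAt a n p = Ycand n x c) : False := by
  have hn2 : 2 ≤ n := by omega
  -- final contradiction step, used in the degenerate cases
  have final : (∀ i : Fin n, (i : ℕ) ≠ 0 → x i = 0) → False := by
    clear hc hpW
    intro hz
    obtain ⟨q, hqL, hqw⟩ := key_lemma a hn2 hGen.len_ge
      (fun j => by simpa [zeroWord] using hGen.init j)
      hGen.inj hGen.maximal (x ⟨0, by omega⟩)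
    apply hx
    refine ⟨q, hqL, ?_⟩
    rw [hqw]
    funext j
    rcases Nat.eq_zero_or_pos (j : ℕ) with h0 | h0
    · rw [if_pos h0]
      congr 1
      apply Fin.ext
      simp only [Fin.val_mk]
      omega
    · rw [if_neg (by omega : ¬ ((j : ℕ) = 0))]
      exact (hz j (by omega)).symm
  -- if `Ycand d` occurs at position 0, we are in the degenerate case
  have hzero_case : ∀ d : Fin t, wordAt a n 0 = Ycand n x d → False := by
    clear hc hpW
    intro d h0
    apply final
    intro i hi
    have h1 := congrFun h0 (⟨(i : ℕ) - 1, by have := i.isLt; omega⟩ : Fin n)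
    simp only [wordAt, Ycand] at h1
    rw [dif_neg (show ¬ ((i : ℕ) - 1 + 1 = n) by have := i.isLt; omega)] at h1
    have h2 : a (0 + ((i : ℕ) - 1)) = 0 := by
      simpa [zeroWord] using hGen.init (⟨(i : ℕ) - 1, by have := i.isLt; omega⟩ : Fin n)
    rw [h2] at h1
    have h3 : i = (⟨(i : ℕ) - 1 + 1, by have := i.isLt; omega⟩ : Fin n) := by
      apply Fin.ext
      simp only [Fin.val_mk]
      omega
    rw [h3]
    exact h1.symm
  have hW : ∀ j : Fin n, a (p + (j : ℕ)) = Ycand n x c j := fun j => congrFun hpW j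
  rcases Nat.eq_zero_or_pos p with hp0 | hp1
  · subst hp0
    exact hzero_case c hpW
  -- main case : p ≥ 1
  set k := p + n - 1 with hk
  have hkn : n ≤ k := by omega
  have hkL : k < L := by omega
  obtain ⟨i0, hi0, hseen⟩ := hGen.greedy k hkn hkL
  have hwind : wordAt a m (k - m) = (fun i : Fin m =>
      x ⟨n - m + (i : ℕ), by have := i.isLt; omega⟩) := by
    funext i
    have hilt := i.isLt
    have hpos : k - m + (i : ℕ) = p + (n - m - 1 + (i : ℕ)) := by omega
    simp only [wordAt]
    rw [hpos]
    have h2 := hW (⟨n - m - 1 + (i : ℕ), by omega⟩ : Fin n)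
    simp only [Ycand] at h2
    rw [dif_neg (show ¬ (n - m - 1 + (i : ℕ) + 1 = n) by omega)] at h2
    rw [h2]
    congr 1
    apply Fin.ext
    simp only [Fin.val_mk]
    omega
  have hak : a k = c := by
    have h2 := hW (⟨n - 1, by omega⟩ : Fin n)
    simp only [Ycand] at h2
    rw [dif_pos (show (n - 1) + 1 = n by omega)] at h2
    rw [show k = p + (n - 1) by omega]
    exact h2
  have hi0t : i0 = ⟨t - 1, by omega⟩ := by
    apply (hP (wordAt a m (k - m))).1
    rw [← hi0, hak, hc, hwind]
  -- candidates at step k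
  have hcand : ∀ d : Fin t, cand a n k d = Ycand n x d := by
    intro d
    funext j
    by_cases hj : (j : ℕ) + 1 = n
    · simp [cand, Ycand, hj]
    · simp only [cand, Ycand, if_neg hj, dif_neg hj]
      rw [show k - (n - 1) + (j : ℕ) = p + (j : ℕ) by omega]
      have h2 := hW j
      simp only [Ycand] at h2
      rw [dif_neg hj] at h2
      exact h2
  -- every word (x₂,…,xₙ,d) occurs
  have hocc : ∀ d : Fin t, ∃ q, q + n ≤ L ∧ wordAt a n q = Ycand n x d := by
    intro d
    by_cases hd : d = c
    · exact ⟨p, hpL, by rw [hpW, hd]⟩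
    · obtain ⟨jj, hjj⟩ := (hP (wordAt a m (k - m))).2 d
      have hjjne : (jj : ℕ) ≠ t - 1 := by
        intro hE
        apply hd
        rw [← hjj, hc, ← hwind]
        congr 1
        exact Fin.ext hE
      have hjjlt : jj < i0 := by
        rw [hi0t]
        have h1 := jj.isLt
        exact Fin.lt_def.mpr (by simp only [Fin.val_mk]; omega)
      obtain ⟨q, hq1, hq2⟩ := hseen jj hjjlt
      refine ⟨q, by omega, ?_⟩
      rw [hq2, hjj, hcand d]
  choose F hF1 hF2 using hocc
  have hlast : ∀ d : Fin t, a (F d + (n - 1)) = d := by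
    intro d
    have h2 := congrFun (hF2 d) (⟨n - 1, by omega⟩ : Fin n)
    simp only [wordAt, Ycand] at h2
    rw [dif_pos (show (n - 1) + 1 = n by omega)] at h2
    exact h2
  by_cases hall : ∀ d : Fin t, 1 ≤ F d
  · -- predecessor injection
    have hword : ∀ d : Fin t, wordAt a n (F d - 1) =
        fun j : Fin n => if (j : ℕ) = 0 then a (F d - 1) else x j := by
      intro d
      funext j
      rcases Nat.eq_zero_or_pos (j : ℕ) with h0 | h0
      · simp [wordAt, h0]
      · simp only [wordAt, if_neg (by omega : ¬ ((j : ℕ) = 0))]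
        have h1 : F d - 1 + (j : ℕ) = F d + ((j : ℕ) - 1) := by have := hall d; omega
        have h2 := congrFun (hF2 d) (⟨(j : ℕ) - 1, by have := j.isLt; omega⟩ : Fin n)
        simp only [wordAt, Ycand] at h2
        rw [dif_neg (show ¬ ((j : ℕ) - 1 + 1 = n) by have := j.isLt; omega)] at h2
        rw [h1, h2]
        congr 1
        apply Fin.ext
        simp only [Fin.val_mk]
        omega
    have hfinj : Function.Injective (fun d : Fin t => a (F d - 1)) := by
      intro d d' h
      simp only at h
      have heq : wordAt a n (F d - 1) = wordAt a n (F d' - 1) := by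
        rw [hword d, hword d', h]
      have hFeq := hGen.inj (F d - 1) (F d' - 1)
        (by have := hF1 d; have := hall d; omega)
        (by have := hF1 d'; have := hall d'; omega) heq
      have hFF : F d = F d' := by have := hall d; have := hall d'; omega
      rw [← hlast d, ← hlast d', hFF]
    obtain ⟨d, hd⟩ := Finite.injective_iff_surjective.mp hfinj (x ⟨0, by omega⟩)
    simp only at hd
    apply hx
    refine ⟨F d - 1, by have := hF1 d; have := hall d; omega, ?_⟩
    rw [hword d]
    funext j
    rcases Nat.eq_zero_or_pos (j : ℕ) with h0 | h0
    · rw [if_pos h0, hd]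
      congr 1
      apply Fin.ext
      simp only [Fin.val_mk]
      omega
    · rw [if_neg (by omega : ¬ ((j : ℕ) = 0))]
  · push_neg at hall
    obtain ⟨d0, hd0⟩ := hall
    have h0 : F d0 = 0 := by omega
    apply hzero_case d0
    rw [← h0]
    exact hF2 d0

/-- Under the hypotheses of the main converse theorem, if the word
`X₁ = (x_1,…,x_n)` does not occur in the sequence `S` produced by Algorithm P, then
neither does `X₂ = (x_2,…,x_n,c)`, where `c = P_t(x_{n-s+2},…,x_n)`. -/
theorem statement_8 (t s n : ℕ) [NeZero t] (ht : 2 ≤ t) (hs : 2 ≤ s) (hn : s ≤ n)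
    (P : (Fin (s - 1) → Fin t) → Fin t → Fin t) (hP : IsPrefFun t (s - 1) P)
    (hg : OnlyZeroCycle (leastPF (show 0 < t by omega) P))
    (a : ℕ → Fin t) (L : ℕ) (hGen : GenSeqFrom t (s - 1) n (zeroWord t n) P a L)
    (x : Fin n → Fin t) (hx : ¬ ∃ p, p + n ≤ L ∧ wordAt a n p = x) :
    ¬ ∃ p, p + n ≤ L ∧ wordAt a n p =
      fun j : Fin n =>
        if h : (j : ℕ) + 1 = n then
          P (fun i : Fin (s - 1) =>
              x ⟨n - (s - 1) + (i : ℕ), by have := i.isLt; omega⟩)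
            ⟨t - 1, by omega⟩
        else x ⟨(j : ℕ) + 1, by have := j.isLt; omega⟩ := by
  rintro ⟨p, hpL, hpW⟩
  exact main_aux ht (by omega) (by omega) P hP a L hGen x hx _ rfl p hpL hpW
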